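/- arXiv:1610.09791 — 3 statements merged into one kernel-verified Lean document; each statement's English description precedes it below -/
import Mathlib

section
/- Fix 0 < β < α < 1/2 with α − β > 1/2 − α, and let n ≥ 2 be large enough that n^{β + 1/2 − 2α} exp(n^{−α}) < 1. Let p be a complex polynomial of degree at most n and ζ ∈ ℂ satisfying: p(ζ) = 0, |p'(ζ)| > 2 n^{1+α}, and |p^{(k)}(ζ)| < n^{k + 1/2 + β} for all k = 2, 3, …, n. Then |p(z)| > 1 for every z on the circle |z − ζ| = n^{−1−α}. Consequently the lemniscate {z : |p(z)| = 1} has a connected component contained in the open disk |z − ζ| < n^{−1−α}. -/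
/-!
On the circle `|z - ζ| = r` with `r = n^{-1-α}` the linear Taylor term has modulus
`|p'(ζ)| r > 2`. Writing `x = n^{-α}`, the bound on `p^{(k)}(ζ)` makes the `k`-th Taylor term at
most `n^{1/2+β} x^k / k!`, so the terms with `k ≥ 2` sum to at most
`n^{1/2+β} x² e^x = n^{β+1/2-2α} e^{n^{-α}} < 1`; hence `|p| > 1` on the circle. As `p(ζ) = 0`,
the intermediate value theorem along a radius gives a point of the lemniscate inside the disk,
and its connected component cannot cross the circle.
-/

open Polynomial Finset Metric
open scoped Nat

namespace Polynomial

theorem iterate_derivative_eval_eq_factorial_mul_taylor_coeff {R : Type*} [CommSemiring R]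
    (p : R[X]) (ζ : R) (k : ℕ) :
    (derivative^[k] p).eval ζ = k ! * (taylor ζ p).coeff k := by
  rw [taylor_coeff, ← factorial_smul_hasseDeriv, LinearMap.smul_apply, eval_smul, nsmul_eq_mul]

theorem eval_eq_add_sum_Ico_two_iterate_derivative {K : Type*} [Field K] [CharZero K]
    {p : K[X]} {n : ℕ} (hp : p.natDegree ≤ n) (ζ z : K) :
    p.eval z = p.eval ζ + (derivative p).eval ζ * (z - ζ) +
      ∑ k ∈ Ico 2 (n + 1), (derivative^[k] p).eval ζ / k ! * (z - ζ) ^ k := by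
  have hcoeff : ∀ k, (taylor ζ p).coeff k = (derivative^[k] p).eval ζ / k ! := fun k => by
    rw [iterate_derivative_eval_eq_factorial_mul_taylor_coeff, mul_div_cancel_left₀ _
      (Nat.cast_ne_zero.mpr k.factorial_ne_zero)]
  have htail : ∑ k ∈ Ico 2 (n + 1), (taylor ζ p).coeff k * (z - ζ) ^ k =
      ∑ k ∈ Ico 2 (n + 2), (taylor ζ p).coeff k * (z - ζ) ^ k := by
    refine sum_subset (Ico_subset_Ico_right (by omega)) fun k hk hk' => ?_
    simp only [mem_Ico] at hk hk'
    rw [coeff_eq_zero_of_natDegree_lt (by rw [natDegree_taylor]; omega), zero_mul]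
  rw [← taylor_eval_sub ζ p z, eval_eq_sum_range' (n := n + 2) (by rw [natDegree_taylor]; omega),
    ← sum_range_add_sum_Ico _ (by omega : 2 ≤ n + 2), ← htail, sum_range_succ, sum_range_one,
    taylor_coeff_zero, taylor_coeff_one, pow_zero, mul_one, pow_one]
  simp only [hcoeff]

end Polynomial

theorem sum_Ico_two_pow_div_factorial_le {x : ℝ} (hx : 0 ≤ x) (m : ℕ) :
    ∑ k ∈ Ico 2 m, x ^ k / k ! ≤ x ^ 2 * Real.exp x := by
  calc ∑ k ∈ Ico 2 m, x ^ k / k !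
      = ∑ j ∈ range (m - 2), x ^ 2 * (x ^ j / (2 + j)!) := by
        rw [sum_Ico_eq_sum_range]
        simp only [pow_add, mul_div_assoc]
    _ ≤ ∑ j ∈ range (m - 2), x ^ 2 * (x ^ j / j !) := by
        gcongr
        omega
    _ ≤ x ^ 2 * Real.exp x := by
        rw [← mul_sum]
        gcongr
        exact Real.sum_le_exp_of_nonneg hx _

section Certificate

variable {α β : ℝ} {n : ℕ} {p : ℂ[X]} {ζ : ℂ}

theorem sum_Ico_two_norm_iterate_derivative_le (hn : 0 < n)
    (hhigher : ∀ k : ℕ, 2 ≤ k → k ≤ n →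
      ‖(derivative^[k] p).eval ζ‖ < (n : ℝ) ^ ((k : ℝ) + 1 / 2 + β)) :
    ∑ k ∈ Ico 2 (n + 1), ‖(derivative^[k] p).eval ζ‖ / k ! * ((n : ℝ) ^ (-(1 : ℝ) - α)) ^ k ≤
      (n : ℝ) ^ (β + 1 / 2 - 2 * α) * Real.exp ((n : ℝ) ^ (-α)) := by
  have hn0 : (0 : ℝ) < n := Nat.cast_pos.mpr hn
  have hpow : ∀ (a b : ℝ) (k : ℕ), ((n : ℝ) ^ a) ^ k * (n : ℝ) ^ b = (n : ℝ) ^ (a * k + b) :=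
    fun a b k => by rw [← Real.rpow_natCast, ← Real.rpow_mul hn0.le, Real.rpow_add hn0]
  calc ∑ k ∈ Ico 2 (n + 1), ‖(derivative^[k] p).eval ζ‖ / k ! * ((n : ℝ) ^ (-(1 : ℝ) - α)) ^ k
      ≤ ∑ k ∈ Ico 2 (n + 1), (n : ℝ) ^ ((k : ℝ) + 1 / 2 + β) / k ! *
          ((n : ℝ) ^ (-(1 : ℝ) - α)) ^ k := by
        gcongr with k hk
        rw [mem_Ico] at hk
        exact (hhigher k hk.1 (by omega)).le
    _ = ∑ k ∈ Ico 2 (n + 1), (n : ℝ) ^ ((1 : ℝ) / 2 + β) * (((n : ℝ) ^ (-α)) ^ k / k !) := by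
        refine sum_congr rfl fun k _ => ?_
        rw [div_mul_eq_mul_div, mul_comm, hpow, mul_div_assoc', mul_comm _ (((n : ℝ) ^ (-α)) ^ k),
          hpow]
        ring_nf
    _ ≤ (n : ℝ) ^ ((1 : ℝ) / 2 + β) * (((n : ℝ) ^ (-α)) ^ 2 * Real.exp ((n : ℝ) ^ (-α))) := by
        rw [← mul_sum]
        gcongr
        exact sum_Ico_two_pow_div_factorial_le (by positivity) _
    _ = (n : ℝ) ^ (β + 1 / 2 - 2 * α) * Real.exp ((n : ℝ) ^ (-α)) := by
        rw [← mul_assoc, mul_comm _ (((n : ℝ) ^ (-α)) ^ 2), hpow]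
        ring_nf

theorem one_lt_norm_eval_of_norm_sub_eq (hn : 0 < n)
    (hsmall : (n : ℝ) ^ (β + 1 / 2 - 2 * α) * Real.exp ((n : ℝ) ^ (-α)) < 1)
    (hdeg : p.natDegree ≤ n) (hzero : p.eval ζ = 0)
    (hderiv : 2 * (n : ℝ) ^ ((1 : ℝ) + α) < ‖(derivative p).eval ζ‖)
    (hhigher : ∀ k : ℕ, 2 ≤ k → k ≤ n →
      ‖(derivative^[k] p).eval ζ‖ < (n : ℝ) ^ ((k : ℝ) + 1 / 2 + β))
    {z : ℂ} (hz : ‖z - ζ‖ = (n : ℝ) ^ (-(1 : ℝ) - α)) :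
    1 < ‖p.eval z‖ := by
  have hn0 : (0 : ℝ) < n := Nat.cast_pos.mpr hn
  have hlinear : 2 < ‖(derivative p).eval ζ * (z - ζ)‖ := by
    have hinv : (n : ℝ) ^ ((1 : ℝ) + α) * (n : ℝ) ^ (-(1 : ℝ) - α) = 1 := by
      rw [← Real.rpow_add hn0]
      norm_num
    rw [norm_mul, hz]
    nlinarith [Real.rpow_pos_of_pos hn0 (-(1 : ℝ) - α)]
  have htail : ‖p.eval z - (derivative p).eval ζ * (z - ζ)‖ ≤
      (n : ℝ) ^ (β + 1 / 2 - 2 * α) * Real.exp ((n : ℝ) ^ (-α)) := by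
    rw [eval_eq_add_sum_Ico_two_iterate_derivative hdeg ζ z, hzero, zero_add, add_sub_cancel_left]
    refine (norm_sum_le _ _).trans (le_of_eq_of_le (sum_congr rfl fun k _ => ?_)
      (sum_Ico_two_norm_iterate_derivative_le hn hhigher))
    rw [norm_mul, norm_div, norm_pow, hz, Complex.norm_natCast]
  linarith [norm_le_insert' ((derivative p).eval ζ * (z - ζ)) (p.eval z),
    norm_sub_rev ((derivative p).eval ζ * (z - ζ)) (p.eval z)]

end Certificate

theorem connectedComponentIn_subset_ball {X : Type*} [PseudoMetricSpace X] {s : Set X}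
    {x ζ : X} {r : ℝ} (hs : ∀ y ∈ s, dist y ζ ≠ r) (hx : x ∈ s) (hxr : x ∈ ball ζ r) :
    connectedComponentIn s x ⊆ ball ζ r := by
  refine isPreconnected_connectedComponentIn.subset_left_of_subset_union isOpen_ball
    isClosed_closedBall.isOpen_compl (disjoint_compl_right.mono_left ball_subset_closedBall)
    (fun y hy => ?_) ⟨x, mem_connectedComponentIn hx, hxr⟩
  rcases (hs y (connectedComponentIn_subset s x hy)).lt_or_gt with h | h
  · exact Or.inl h
  · exact Or.inr (not_le.mpr h)

theorem exists_mem_ball_eq_of_lt_on_sphere {E : Type*} [NormedAddCommGroup E] [NormedSpace ℝ E]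
    [Nontrivial E] {f : E → ℝ} {ζ : E} {r c : ℝ} (hr : 0 ≤ r)
    (hf : ContinuousOn f (closedBall ζ r)) (hζ : f ζ ≤ c) (hsphere : ∀ z ∈ sphere ζ r, c < f z) :
    ∃ z ∈ ball ζ r, f z = c := by
  obtain ⟨w, hw⟩ := (NormedSpace.sphere_nonempty (x := ζ)).mpr hr
  have hseg : segment ℝ ζ w ⊆ closedBall ζ r :=
    (convex_closedBall ζ r).segment_subset (mem_closedBall_self hr) (sphere_subset_closedBall hw)
  obtain ⟨z, hz, hfz⟩ := (convex_segment ζ w).isPreconnected.intermediate_value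
    (left_mem_segment ℝ ζ w) (right_mem_segment ℝ ζ w) (hf.mono hseg) ⟨hζ, (hsphere w hw).le⟩
  refine ⟨z, (mem_closedBall.mp (hseg hz)).lt_of_ne fun hzr => ?_, hfz⟩
  exact (hsphere z hzr).ne' hfz

theorem localized_component_certificate_general (α β : ℝ) (n : ℕ) (hn : 2 ≤ n)
    (hsmall : (n : ℝ) ^ (β + 1 / 2 - 2 * α) * Real.exp ((n : ℝ) ^ (-α)) < 1)
    (p : Polynomial ℂ) (hdeg : p.natDegree ≤ n) (ζ : ℂ)
    (hzero : p.eval ζ = 0)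
    (hderiv : 2 * (n : ℝ) ^ ((1 : ℝ) + α) < ‖(Polynomial.derivative p).eval ζ‖)
    (hhigher : ∀ k : ℕ, 2 ≤ k → k ≤ n →
      ‖(Polynomial.derivative^[k] p).eval ζ‖ < (n : ℝ) ^ ((k : ℝ) + 1 / 2 + β)) :
    (∀ z : ℂ, ‖z - ζ‖ = (n : ℝ) ^ (-(1 : ℝ) - α) →
        1 < ‖p.eval z‖) ∧
    ∃ z₀ ∈ {z : ℂ | ‖p.eval z‖ = 1},
      ‖z₀ - ζ‖ < (n : ℝ) ^ (-(1 : ℝ) - α) ∧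
      connectedComponentIn {z : ℂ | ‖p.eval z‖ = 1} z₀
        ⊆ Metric.ball ζ ((n : ℝ) ^ (-(1 : ℝ) - α)) := by
  have hcircle : ∀ z : ℂ, ‖z - ζ‖ = (n : ℝ) ^ (-(1 : ℝ) - α) → 1 < ‖p.eval z‖ :=
    fun z => one_lt_norm_eval_of_norm_sub_eq (by omega) hsmall hdeg hzero hderiv hhigher
  have hoff : ∀ z ∈ {z : ℂ | ‖p.eval z‖ = 1}, dist z ζ ≠ (n : ℝ) ^ (-(1 : ℝ) - α) :=
    fun z hz hzr => (hcircle z (dist_eq_norm z ζ ▸ hzr)).ne' hz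
  obtain ⟨z₀, hz₀r, hz₀⟩ := exists_mem_ball_eq_of_lt_on_sphere (f := fun z => ‖p.eval z‖)
    (Real.rpow_nonneg (Nat.cast_nonneg n) _) p.continuous.norm.continuousOn
    (by simp [hzero]) fun z hz => hcircle z (mem_sphere_iff_norm.mp hz)
  exact ⟨hcircle, z₀, hz₀, mem_ball_iff_norm.mp hz₀r,
    connectedComponentIn_subset_ball hoff hz₀ hz₀r⟩

/-- Certificate for a localized component of the lemniscate. Fix `0 < β < α < 1/2` with
`α - β > 1/2 - α` and `n ≥ 2` large enough that `n^{β+1/2-2α} e^{n^{-α}} < 1`. If a polynomial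
`p` of degree at most `n` satisfies `p(ζ) = 0`, `|p'(ζ)| > 2 n^{1+α}` and
`|p^{(k)}(ζ)| < n^{k+1/2+β}` for `2 ≤ k ≤ n`, then `|p| > 1` on the circle
`|z - ζ| = n^{-1-α}`; consequently the lemniscate `{|p| = 1}` has a connected component
contained in the open disk `|z - ζ| < n^{-1-α}`. -/
theorem localized_component_certificate (α β : ℝ) (n : ℕ)
    (hβ : 0 < β) (hβα : β < α) (hα : α < 1 / 2) (hgap : 1 / 2 - α < α - β) (hn : 2 ≤ n)
    (hsmall : (n : ℝ) ^ (β + 1 / 2 - 2 * α) * Real.exp ((n : ℝ) ^ (-α)) < 1)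
    (p : Polynomial ℂ) (hdeg : p.natDegree ≤ n) (ζ : ℂ)
    (hzero : p.eval ζ = 0)
    (hderiv : 2 * (n : ℝ) ^ ((1 : ℝ) + α) < ‖(Polynomial.derivative p).eval ζ‖)
    (hhigher : ∀ k : ℕ, 2 ≤ k → k ≤ n →
      ‖(Polynomial.derivative^[k] p).eval ζ‖ < (n : ℝ) ^ ((k : ℝ) + 1 / 2 + β)) :
    (∀ z : ℂ, ‖z - ζ‖ = (n : ℝ) ^ (-(1 : ℝ) - α) →
        1 < ‖p.eval z‖) ∧
    ∃ z₀ ∈ {z : ℂ | ‖p.eval z‖ = 1},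
      ‖z₀ - ζ‖ < (n : ℝ) ^ (-(1 : ℝ) - α) ∧
      connectedComponentIn {z : ℂ | ‖p.eval z‖ = 1} z₀
        ⊆ Metric.ball ζ ((n : ℝ) ^ (-(1 : ℝ) - α)) :=
  localized_component_certificate_general α β n hn hsmall p hdeg ζ hzero hderiv hhigher
end

section
/- Fix s > 0. For z ∈ ℂ set a(z) = Σ_{k=0}^n |z|^{2k}, b₁(z) = z̄ Σ_{k=1}^n k |z|^{2k−2}, and c₁(z) = Σ_{k=1}^n k² |z|^{2k−2}. Then there exist a constant C₂(s) > 0 and N(s) ∈ ℕ such that for all n ≥ N(s) and all z in the annulus T_n(s) = {z : e^{−s/n} < |z| < e^{s/n}}, one has (a(z) c₁(z) − |b₁(z)|²)/a(z) ≥ C₂(s) n³. -/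
/-- `a(z) = ∑_{k=0}^n |z|^{2k}` for the Kac covariance kernel. -/
noncomputable def kacA (n : ℕ) (z : ℂ) : ℝ :=
  ∑ k ∈ Finset.range (n + 1), ‖z‖ ^ (2 * k)

/-- `b₁(z) = z̄ ∑_{k=1}^n k |z|^{2k-2}` for the Kac kernel; this is the real sum
`∑_{k=1}^n k |z|^{2k-2}`, so that `b₁ = z̄ ⬝ kacBsum` and `|b₁|² = |z|² ⬝ kacBsum²`. -/
noncomputable def kacBsum (n : ℕ) (z : ℂ) : ℝ :=
  ∑ k ∈ Finset.Icc 1 n, (k : ℝ) * ‖z‖ ^ (2 * k - 2)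

/-- `c₁(z) = ∑_{k=1}^n k² |z|^{2k-2}` for the Kac kernel. -/
noncomputable def kacC1 (n : ℕ) (z : ℂ) : ℝ :=
  ∑ k ∈ Finset.Icc 1 n, (k : ℝ) ^ 2 * ‖z‖ ^ (2 * k - 2)

/-!
With `x = |z|²` and weights `w k = x ^ k` for `0 ≤ k ≤ n`, the identities `a = ∑ w`,
`x β = ∑ k w`, `x c₁ = ∑ k² w` (where `b₁ = z̄ β`) turn `x (a c₁ - |b₁|²)` into
`(∑ w)(∑ k² w) - (∑ k w)² = ½ ∑_{j,k} w_j w_k (j - k)²`, a weighted variance of the index.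
On `T_n(s)` every weight lies in `[e^{-2s}, e^{2s}]`, so this is at least
`e^{-4s} (n+1)² n (n+2) / 12`, while `x a ≤ e^{4s} (n+1)`.
-/

open Finset Real

theorem Finset.two_mul_weighted_variance_eq {ι R : Type*} [CommRing R] (s : Finset ι)
    (w f : ι → R) :
    2 * ((∑ i ∈ s, w i) * (∑ i ∈ s, w i * f i ^ 2) - (∑ i ∈ s, w i * f i) ^ 2) =
      ∑ i ∈ s, ∑ j ∈ s, w i * w j * (f i - f j) ^ 2 := by
  have hsq : ∀ i j, w i * w j * (f i - f j) ^ 2 =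
      w j * (w i * f i ^ 2) + w i * (w j * f j ^ 2) - 2 * ((w i * f i) * (w j * f j)) :=
    fun i j => by ring
  simp only [hsq, sum_add_distrib, sum_sub_distrib, ← mul_sum, ← sum_mul]
  ring

theorem sum_range_cast_id (N : ℕ) : ∑ j ∈ range N, (j : ℝ) = N * (N - 1) / 2 := by
  induction N with
  | zero => simp
  | succ N ih => rw [sum_range_succ, ih]; push_cast; ring

theorem sum_range_cast_sq (N : ℕ) :
    ∑ j ∈ range N, (j : ℝ) ^ 2 = N * (N - 1) * (2 * N - 1) / 6 := by
  induction N with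
  | zero => simp
  | succ N ih => rw [sum_range_succ, ih]; push_cast; ring

theorem sum_range_sum_range_cast_sub_sq (N : ℕ) :
    ∑ j ∈ range N, ∑ k ∈ range N, ((j : ℝ) - k) ^ 2 = N ^ 2 * (N ^ 2 - 1) / 6 := by
  have h := (range N).two_mul_weighted_variance_eq (fun _ => (1 : ℝ)) (fun j => (j : ℝ))
  simp only [one_mul, sum_const, card_range, nsmul_eq_mul, mul_one] at h
  rw [← h, sum_range_cast_id, sum_range_cast_sq]
  ring

theorem pow_mem_Icc_exp_of_mul_abs_log_le {r t : ℝ} {m : ℕ} (hr : 0 < r)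
    (h : m * |log r| ≤ t) : exp (-t) ≤ r ^ m ∧ r ^ m ≤ exp t := by
  rw [← exp_log hr, ← exp_nat_mul, exp_le_exp, exp_le_exp, ← abs_le]
  rwa [abs_mul, Nat.abs_cast]

theorem sq_mul_sum_Icc_pow_two_mul_sub_two {g : ℕ → ℝ} (hg : g 0 = 0) (r : ℝ) (n : ℕ) :
    r ^ 2 * ∑ k ∈ Icc 1 n, g k * r ^ (2 * k - 2) = ∑ k ∈ range (n + 1), (r ^ 2) ^ k * g k := by
  rw [sum_range_succ', hg, mul_zero, add_zero, mul_sum, ← Ico_add_one_right_eq_Icc,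
    sum_Ico_eq_sum_range]
  refine sum_congr (by simp) fun k _ => ?_
  rw [add_comm 1 k, ← pow_mul, mul_add_one, Nat.add_sub_cancel, pow_add]
  ring

theorem sq_mul_le_weighted_variance_range {w : ℕ → ℝ} {m : ℝ} {N : ℕ} (hm : 0 ≤ m)
    (hw : ∀ k < N, m ≤ w k) :
    m ^ 2 * (N ^ 2 * (N ^ 2 - 1) / 12) ≤
      (∑ k ∈ range N, w k) * (∑ k ∈ range N, w k * (k : ℝ) ^ 2) -
        (∑ k ∈ range N, w k * k) ^ 2 := by
  have hsum : m ^ 2 * (N ^ 2 * (N ^ 2 - 1) / 6) ≤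
      ∑ j ∈ range N, ∑ k ∈ range N, w j * w k * ((j : ℝ) - k) ^ 2 := by
    rw [← sum_range_sum_range_cast_sub_sq, mul_sum]
    refine sum_le_sum fun j hj => ?_
    rw [mul_sum]
    refine sum_le_sum fun k hk => ?_
    rw [mem_range] at hj hk
    have hwjk : m ^ 2 ≤ w j * w k := by
      rw [sq]; exact mul_le_mul (hw j hj) (hw k hk) hm (hm.trans (hw j hj))
    exact mul_le_mul_of_nonneg_right hwjk (sq_nonneg _)
  have := (range N).two_mul_weighted_variance_eq w (fun k => (k : ℝ))
  linarith

theorem kacA_eq (n : ℕ) (z : ℂ) : kacA n z = ∑ k ∈ range (n + 1), (‖z‖ ^ 2) ^ k := by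
  simp only [kacA, pow_mul]

theorem sq_mul_kacBsum (n : ℕ) (z : ℂ) :
    ‖z‖ ^ 2 * kacBsum n z = ∑ k ∈ range (n + 1), (‖z‖ ^ 2) ^ k * (k : ℝ) :=
  sq_mul_sum_Icc_pow_two_mul_sub_two Nat.cast_zero _ _

theorem sq_mul_kacC1 (n : ℕ) (z : ℂ) :
    ‖z‖ ^ 2 * kacC1 n z = ∑ k ∈ range (n + 1), (‖z‖ ^ 2) ^ k * (k : ℝ) ^ 2 :=
  sq_mul_sum_Icc_pow_two_mul_sub_two (g := fun k => (k : ℝ) ^ 2) (by simp) _ _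

theorem one_le_kacA (n : ℕ) (z : ℂ) : 1 ≤ kacA n z := by
  have := single_le_sum (f := fun k => ‖z‖ ^ (2 * k)) (fun k _ => by positivity)
    (mem_range.2 n.succ_pos)
  simpa [kacA] using this

theorem kac_det_div_eq {z : ℂ} (hz : 0 < ‖z‖) (n : ℕ) :
    (kacA n z * kacC1 n z - ‖z‖ ^ 2 * kacBsum n z ^ 2) / kacA n z =
      ((∑ k ∈ range (n + 1), (‖z‖ ^ 2) ^ k) *
          (∑ k ∈ range (n + 1), (‖z‖ ^ 2) ^ k * (k : ℝ) ^ 2) -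
        (∑ k ∈ range (n + 1), (‖z‖ ^ 2) ^ k * (k : ℝ)) ^ 2) / (‖z‖ ^ 2 * kacA n z) := by
  rw [← kacA_eq, ← sq_mul_kacBsum, ← sq_mul_kacC1, ← mul_div_mul_left _ _ (pow_pos hz 2).ne']
  ring_nf

theorem sq_norm_pow_mem_Icc_of_mem_annulus {s : ℝ} {n k : ℕ} {z : ℂ} (hn : 0 < n) (hk : k ≤ n)
    (hz₁ : exp (-s / n) < ‖z‖) (hz₂ : ‖z‖ < exp (s / n)) :
    exp (-(2 * s)) ≤ (‖z‖ ^ 2) ^ k ∧ (‖z‖ ^ 2) ^ k ≤ exp (2 * s) := by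
  have hn₀ : (0 : ℝ) < n := by exact_mod_cast hn
  have hr : 0 < ‖z‖ := (exp_pos _).trans hz₁
  have hlog : n * |log ‖z‖| ≤ s := by
    rw [← le_div_iff₀' hn₀]
    refine (abs_lt.2 ⟨?_, (log_lt_iff_lt_exp hr).2 hz₂⟩).le
    rw [← neg_div]
    exact (lt_log_iff_exp_lt hr).2 hz₁
  have hk' : (k : ℝ) ≤ n := by exact_mod_cast hk
  rw [← pow_mul]
  refine pow_mem_Icc_exp_of_mul_abs_log_le hr ?_
  push_cast
  nlinarith [abs_nonneg (log ‖z‖)]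

theorem kac_covariance_determinant_lower_bound_general (s : ℝ) :
    ∃ C₂ > (0 : ℝ), ∃ N : ℕ, ∀ n ≥ N, ∀ z : ℂ,
      Real.exp (-s / n) < ‖z‖ → ‖z‖ < Real.exp (s / n) →
        C₂ * (n : ℝ) ^ 3 ≤
          (kacA n z * kacC1 n z - ‖z‖ ^ 2 * kacBsum n z ^ 2) / kacA n z := by
  refine ⟨exp (-(8 * s)) / 12, by positivity, 1, fun n hn z hz₁ hz₂ => ?_⟩
  have hr : 0 < ‖z‖ := (exp_pos _).trans hz₁
  have hpow (k : ℕ) (hk : k ≤ n) := sq_norm_pow_mem_Icc_of_mem_annulus hn hk hz₁ hz₂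
  have hx : ‖z‖ ^ 2 ≤ exp (2 * s) := by simpa using (hpow 1 hn).2
  have hA₀ : 0 < kacA n z := one_pos.trans_le (one_le_kacA n z)
  have hA : kacA n z ≤ (n + 1) * exp (2 * s) := by
    rw [kacA_eq]
    calc _ ≤ ∑ _k ∈ range (n + 1), exp (2 * s) :=
          sum_le_sum fun k hk => (hpow k (Nat.lt_succ_iff.1 (mem_range.1 hk))).2
      _ = _ := by simp
  have hvar := sq_mul_le_weighted_variance_range (exp_pos (-(2 * s))).le
    fun k hk => (hpow k (Nat.lt_succ_iff.1 hk)).1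
  rw [Nat.cast_succ] at hvar
  rw [kac_det_div_eq hr, le_div_iff₀ (by positivity)]
  refine le_trans ?_ hvar
  calc exp (-(8 * s)) / 12 * n ^ 3 * (‖z‖ ^ 2 * kacA n z)
      ≤ exp (-(8 * s)) / 12 * n ^ 3 * (exp (2 * s) * ((n + 1) * exp (2 * s))) := by gcongr
    _ = exp (-(2 * s)) ^ 2 * (n ^ 3 * (n + 1) / 12) := by
      have hexp : exp (-(8 * s)) * exp (2 * s) * exp (2 * s) = exp (-(2 * s)) ^ 2 := by
        rw [← exp_add, ← exp_add, ← exp_nat_mul]; ring_nf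
      linear_combination n ^ 3 * (n + 1) / 12 * hexp
    _ ≤ _ := by
      gcongr exp (-(2 * s)) ^ 2 * (?_ / 12)
      nlinarith [show (0 : ℝ) ≤ (n + 1) * n * (3 * n + 2) by positivity]

/-- There exist `C₂(s) > 0` and `N(s)` such that for all `n ≥ N(s)` and all `z` in the
annulus `T_n(s) = {e^{-s/n} < |z| < e^{s/n}}`, one has
`(a c₁ - |b₁|²)/a ≥ C₂(s) n³`. -/
theorem kac_covariance_determinant_lower_bound (s : ℝ) (hs : 0 < s) :
    ∃ C₂ > (0 : ℝ), ∃ N : ℕ, ∀ n ≥ N, ∀ z : ℂ,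
      Real.exp (-s / n) < ‖z‖ → ‖z‖ < Real.exp (s / n) →
        C₂ * (n : ℝ) ^ 3 ≤
          (kacA n z * kacC1 n z - ‖z‖ ^ 2 * kacBsum n z ^ 2) / kacA n z :=
  kac_covariance_determinant_lower_bound_general s
end

section
/- Let r ∈ (0,1) and let p_n(z) = Σ_{k=0}^n a_k z^k where the a_k are i.i.d. standard complex Gaussian random variables. Then there exist N = N(r) ∈ ℕ and c_r > 0, both independent of n, such that for all n ≥ N the probability that sup_{|z| = r} |p_n(z)| < 1 (equivalently, that the closed disk B(0,r) is contained in a single connected component of U_n = {z : |p_n(z)| < 1}) is greater than c_r. -/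
/-!
On the event that `‖a k‖ ≤ C * t ^ k` for every `k`, where `1 < t < 1 / r` and
`C = (1 - t * r) / 2`, the polynomial is bounded on `‖z‖ = r` by `C * ∑ (t * r) ^ k ≤ 1 / 2`.
By independence this event has probability `∏ k, P(‖a k‖ ≤ C * t ^ k)`. Each factor is positive
and the failure probabilities, at most `2 * exp (-(C * t ^ k) ^ 2 / 2)`, are summable, so the
partial products are bounded away from zero uniformly in `n`.
-/

open MeasureTheory Filter

/-- The standard complex Gaussian measure `N_ℂ(0,1)`,
with density `π⁻¹ exp(-|z|²)` with respect to Lebesgue measure on `ℂ`. -/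
noncomputable def gaussC : Measure ℂ :=
  volume.withDensity fun z => ENNReal.ofReal (Real.exp (-(‖z‖ ^ 2)) / Real.pi)

/-- The law of the coefficient vector `(a_0, …, a_n)` of a Kac random polynomial:
`n+1` i.i.d. standard complex Gaussians. -/
noncomputable def kacMeasure (n : ℕ) : Measure (Fin (n + 1) → ℂ) :=
  Measure.pi fun _ => gaussC

/-- The lemniscate `{z ∈ ℂ : |p(z)| = 1}` of the polynomial with coefficients `a`. -/
def lemniscate (n : ℕ) (a : Fin (n + 1) → ℂ) : Set ℂ :=
  {z : ℂ | ‖∑ k : Fin (n + 1), a k * z ^ (k : ℕ)‖ = 1}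

open Real Finset Metric

theorem one_sub_sum_le_prod_one_sub {ι : Type*} (s : Finset ι) {f : ι → ℝ}
    (h0 : ∀ i ∈ s, 0 ≤ f i) (h1 : ∀ i ∈ s, f i ≤ 1) :
    1 - ∑ i ∈ s, f i ≤ ∏ i ∈ s, (1 - f i) := by
  classical
  induction s using Finset.induction_on with
  | empty => simp
  | insert a s ha ih =>
    rw [prod_insert ha, sum_insert ha]
    have ih := ih (fun i hi => h0 i (mem_insert_of_mem hi)) fun i hi => h1 i (mem_insert_of_mem hi)
    have hfa0 := h0 a (mem_insert_self a s)
    have hfa1 := h1 a (mem_insert_self a s)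
    have hsum : 0 ≤ ∑ i ∈ s, f i := sum_nonneg fun i hi => h0 i (mem_insert_of_mem hi)
    nlinarith [mul_le_mul_of_nonneg_left ih (sub_nonneg.mpr hfa1)]

theorem exists_pos_lt_prod_range_of_summable {p : ℕ → ENNReal} {f : ℕ → ℝ}
    (hf0 : ∀ k, 0 ≤ f k) (hf : Summable f) (hpf : ∀ k, ENNReal.ofReal (1 - f k) ≤ p k)
    (hp : ∀ k, p k ≠ 0) :
    ∃ N : ℕ, ∃ c > (0 : ℝ), ∀ n ≥ N, ENNReal.ofReal c < ∏ k ∈ range n, p k := by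
  obtain ⟨K, hK⟩ := ((tendsto_sum_nat_add f).eventually (gt_mem_nhds one_half_pos)).exists
  have hhead : 0 < (∏ k ∈ range K, p k) * ENNReal.ofReal (1 / 2) := by
    simp [pos_iff_ne_zero, prod_eq_zero_iff, hp]
  obtain ⟨c, -, hc0, hc⟩ := ENNReal.lt_iff_exists_real_btwn.mp hhead
  refine ⟨K, c, ENNReal.ofReal_pos.mp hc0, fun n hn => hc.trans_le ?_⟩
  rw [← prod_range_mul_prod_Ico _ hn]
  gcongr
  have htail : ∑ k ∈ Ico K n, f k ≤ 1 / 2 := by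
    rw [sum_Ico_eq_sum_range]
    refine le_trans ?_ hK.le
    simp_rw [add_comm K]
    exact ((summable_nat_add_iff K).mpr hf).sum_le_tsum _ fun k _ => hf0 _
  have hf1 : ∀ k ∈ Ico K n, f k ≤ 1 := fun k hk =>
    (single_le_sum (fun j _ => hf0 j) hk).trans (htail.trans (by norm_num))
  calc ENNReal.ofReal (1 / 2)
      ≤ ENNReal.ofReal (∏ k ∈ Ico K n, (1 - f k)) := by
        gcongr
        linarith [one_sub_sum_le_prod_one_sub (Ico K n) (fun k _ => hf0 k) hf1]
    _ = ∏ k ∈ Ico K n, ENNReal.ofReal (1 - f k) :=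
        ENNReal.ofReal_prod_of_nonneg fun k hk => sub_nonneg.mpr (hf1 k hk)
    _ ≤ ∏ k ∈ Ico K n, p k := prod_le_prod' fun k _ => hpf k

theorem summable_exp_neg_mul_pow {b t : ℝ} (hb : 0 < b) (ht : 1 < t) :
    Summable fun k : ℕ => exp (-(b * t ^ k)) := by
  have hgeom : Summable fun k : ℕ => b⁻¹ * t⁻¹ ^ k :=
    (summable_geometric_of_lt_one (by positivity) (inv_lt_one_of_one_lt₀ ht)).mul_left _
  refine hgeom.of_nonneg_of_le (fun k => (exp_pos _).le) fun k => ?_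
  have hx : 0 < b * t ^ k := by positivity
  calc exp (-(b * t ^ k)) = (exp (b * t ^ k))⁻¹ := exp_neg _
    _ ≤ (b * t ^ k)⁻¹ := by
        gcongr
        linarith [add_one_le_exp (b * t ^ k)]
    _ = b⁻¹ * t⁻¹ ^ k := by rw [mul_inv, inv_pow]

theorem lintegral_exp_neg_mul_norm_sq_complex {b : ℝ} (hb : 0 < b) :
    ∫⁻ z : ℂ, ENNReal.ofReal (exp (-b * ‖z‖ ^ 2)) = ENNReal.ofReal (π / b) := by
  have h : ∫ z : ℂ, exp (-b * ‖z‖ ^ 2) = π / b := by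
    rw [GaussianFourier.integral_rexp_neg_mul_sq_norm hb, Complex.finrank_real_complex]
    norm_num
  rw [← h, ofReal_integral_eq_lintegral_ofReal]
  · exact Integrable.of_integral_ne_zero (by rw [h]; positivity)
  · exact Eventually.of_forall fun z => (exp_pos _).le

instance : IsProbabilityMeasure gaussC where
  measure_univ := by
    have hdensity : ∀ z : ℂ, ENNReal.ofReal (exp (-(‖z‖ ^ 2)) / π) =
        ENNReal.ofReal (exp (-1 * ‖z‖ ^ 2)) * ENNReal.ofReal π⁻¹ := fun z => by
      rw [div_eq_mul_inv, ENNReal.ofReal_mul (exp_pos _).le, neg_one_mul]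
    rw [gaussC, withDensity_apply _ .univ, Measure.restrict_univ]
    simp_rw [hdensity]
    rw [lintegral_mul_const _ (by fun_prop), lintegral_exp_neg_mul_norm_sq_complex one_pos,
      ← ENNReal.ofReal_mul (by positivity), div_one, mul_inv_cancel₀ pi_ne_zero, ENNReal.ofReal_one]

theorem gaussC_setOf_lt_norm_le {R : ℝ} (hR : 0 ≤ R) :
    gaussC {z | R < ‖z‖} ≤ ENNReal.ofReal (2 * exp (-(R ^ 2 / 2))) := by
  set a := ENNReal.ofReal (exp (-(R ^ 2 / 2)) / π)
  have hdensity : ∀ z ∈ {z : ℂ | R < ‖z‖},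
      ENNReal.ofReal (exp (-(‖z‖ ^ 2)) / π) ≤ a * ENNReal.ofReal (exp (-(1 / 2) * ‖z‖ ^ 2)) := by
    intro z hz
    rw [← ENNReal.ofReal_mul (by positivity), div_mul_eq_mul_div, ← exp_add]
    have : R ^ 2 ≤ ‖z‖ ^ 2 := pow_le_pow_left₀ hR (le_of_lt hz) 2
    gcongr
    linarith
  calc gaussC {z | R < ‖z‖}
      ≤ ∫⁻ z in {z | R < ‖z‖}, a * ENNReal.ofReal (exp (-(1 / 2) * ‖z‖ ^ 2)) := by
        rw [gaussC, withDensity_apply _ (measurableSet_lt measurable_const measurable_norm)]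
        exact setLIntegral_mono (by fun_prop) hdensity
    _ ≤ ∫⁻ z, a * ENNReal.ofReal (exp (-(1 / 2) * ‖z‖ ^ 2)) := setLIntegral_le_lintegral _ _
    _ = ENNReal.ofReal (2 * exp (-(R ^ 2 / 2))) := by
        rw [lintegral_const_mul _ (by fun_prop),
          lintegral_exp_neg_mul_norm_sq_complex (by norm_num), ← ENNReal.ofReal_mul (by positivity)]
        congr 1
        field_simp

theorem ofReal_one_sub_le_gaussC_closedBall {R : ℝ} (hR : 0 ≤ R) :
    ENNReal.ofReal (1 - 2 * exp (-(R ^ 2 / 2))) ≤ gaussC (closedBall 0 R) := by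
  have hcompl : closedBall (0 : ℂ) R = {z | R < ‖z‖}ᶜ := by
    ext z
    simp
  rw [hcompl, prob_compl_eq_one_sub (measurableSet_lt measurable_const measurable_norm),
    ENNReal.ofReal_sub _ (by positivity), ENNReal.ofReal_one]
  exact tsub_le_tsub_left (gaussC_setOf_lt_norm_le hR) 1

theorem gaussC_closedBall_ne_zero {R : ℝ} (hR : 0 < R) : gaussC (closedBall 0 R) ≠ 0 := by
  rw [gaussC, Ne, withDensity_apply_eq_zero (by fun_prop)]
  have hpos : {z : ℂ | ENNReal.ofReal (exp (-(‖z‖ ^ 2)) / π) ≠ 0} = Set.univ :=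
    Set.eq_univ_of_forall fun z => (ENNReal.ofReal_pos.mpr (by positivity)).ne'
  rw [hpos, Set.univ_inter]
  exact (measure_closedBall_pos volume 0 hR).ne'

theorem exists_pos_lt_prod_gaussC_closedBall {C t : ℝ} (hC : 0 < C) (ht : 1 < t) :
    ∃ N : ℕ, ∃ c > (0 : ℝ), ∀ n ≥ N,
      ENNReal.ofReal c < ∏ k ∈ range n, gaussC (closedBall 0 (C * t ^ k)) := by
  have hsq : ∀ k : ℕ, (C * t ^ k) ^ 2 / 2 = C ^ 2 / 2 * (t ^ 2) ^ k := fun k => by ring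
  refine exists_pos_lt_prod_range_of_summable (f := fun k => 2 * exp (-(C ^ 2 / 2 * (t ^ 2) ^ k)))
    (fun k => by positivity) ((summable_exp_neg_mul_pow (by positivity) ?_).mul_left 2)
    (fun k => ?_) fun k => gaussC_closedBall_ne_zero (by positivity)
  · nlinarith
  · rw [← hsq]
    exact ofReal_one_sub_le_gaussC_closedBall (by positivity)

theorem norm_sum_mul_pow_le_of_norm_le {m : ℕ} {a : Fin m → ℂ} {z : ℂ} {C t : ℝ} (hC : 0 ≤ C)
    (ht : 0 ≤ t) (htz : t * ‖z‖ < 1) (ha : ∀ k, ‖a k‖ ≤ C * t ^ (k : ℕ)) :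
    ‖∑ k : Fin m, a k * z ^ (k : ℕ)‖ ≤ C / (1 - t * ‖z‖) := by
  calc ‖∑ k : Fin m, a k * z ^ (k : ℕ)‖
      ≤ ∑ k : Fin m, C * (t * ‖z‖) ^ (k : ℕ) := by
        refine (norm_sum_le _ _).trans (sum_le_sum fun k _ => ?_)
        rw [norm_mul, norm_pow, mul_pow, ← mul_assoc]
        gcongr
        exact ha k
    _ = C * ∑ k ∈ Ico 0 m, (t * ‖z‖) ^ k := by
        rw [← mul_sum, Fin.sum_univ_eq_sum_range (fun k => (t * ‖z‖) ^ k), range_eq_Ico]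
    _ ≤ C * ((t * ‖z‖) ^ 0 / (1 - t * ‖z‖)) := by
        gcongr
        exact geom_sum_Ico_le_of_lt_one (by positivity) htz
    _ = C / (1 - t * ‖z‖) := by rw [pow_zero, mul_one_div]

/-- For fixed `r ∈ (0,1)` there exist `N = N(r)` and `c_r > 0`, independent of `n`, such that
for all `n ≥ N` the probability that `|p_n| < 1 holds on the whole circle `|z| = r`
(equivalently, `sup_{|z|=r} |p_n(z)| < 1`, i.e. the closed disk `B(0,r)` lies in a single
connected component of `U_n = {|p_n| < 1}`) exceeds `c_r`. -/
theorem disk_in_sublevel_set_positive_probability (r : ℝ) (hr0 : 0 < r) (hr1 : r < 1) :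
    ∃ N : ℕ, ∃ c > (0 : ℝ), ∀ n ≥ N,
      ENNReal.ofReal c <
        kacMeasure n {a | ∀ z : ℂ, ‖z‖ = r →
          ‖∑ k : Fin (n + 1), a k * z ^ (k : ℕ)‖ < 1} := by
  obtain ⟨t, ht1, ht_lt_inv⟩ := exists_between (one_lt_inv_iff₀.mpr ⟨hr0, hr1⟩)
  have htr : t * r < 1 := (lt_div_iff₀ hr0).mp (by rwa [one_div])
  set C := (1 - t * r) / 2 with hC_def
  have hC : 0 < C := by positivity
  have hbox : ∀ n, Set.univ.pi (fun k : Fin (n + 1) => closedBall 0 (C * t ^ (k : ℕ))) ⊆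
      {a | ∀ z : ℂ, ‖z‖ = r → ‖∑ k : Fin (n + 1), a k * z ^ (k : ℕ)‖ < 1} := by
    intro n a ha z hz
    have hak : ∀ k, ‖a k‖ ≤ C * t ^ (k : ℕ) := fun k => by
      simpa using Set.mem_univ_pi.mp ha k
    calc ‖∑ k : Fin (n + 1), a k * z ^ (k : ℕ)‖ ≤ C / (1 - t * ‖z‖) :=
          norm_sum_mul_pow_le_of_norm_le hC.le (by linarith) (by rwa [hz]) hak
      _ < 1 := by rw [hz, div_lt_one (by linarith), hC_def]; linarith
  obtain ⟨N, c, hc, hN⟩ := exists_pos_lt_prod_gaussC_closedBall hC ht1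
  refine ⟨N, c, hc, fun n hn => (hN (n + 1) (by omega)).trans_le ?_⟩
  calc ∏ k ∈ range (n + 1), gaussC (closedBall 0 (C * t ^ k))
      = kacMeasure n (Set.univ.pi fun k : Fin (n + 1) => closedBall 0 (C * t ^ (k : ℕ))) := by
        rw [kacMeasure, Measure.pi_pi]
        exact (Fin.prod_univ_eq_prod_range (fun k => gaussC (closedBall 0 (C * t ^ k))) _).symm
    _ ≤ _ := measure_mono (hbox n)
end
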